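/- Let Q be a symmetric positive definite real n×n matrix and Φ the diagonal matrix with Φⱼⱼ = 1 / (∑ₖ |Q⁻¹ⱼₖ|). Then Φ ≤ Q in the Loewner order, i.e., Q − Φ is positive semidefinite. -/

import Mathlib

/-!
Let `s j = ∑ k |Q⁻¹ j k|`. Gershgorin's circle theorem shows that `diagonal s - Q⁻¹` is positive
semidefinite, i.e. `Q⁻¹ ≤ diagonal s` in the Loewner order. Inversion reverses the Loewner order
on positive definite matrices, so `(diagonal s)⁻¹ ≤ Q`.
-/

open Matrix
open scoped ComplexOrder

namespace Matrix

variable {n : Type*} [Fintype n] [DecidableEq n]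

/-- Both sides say that the block matrix `[[A, 1], [1, B]]` is positive semidefinite, read off
from the Schur complement of `A` and of `B` respectively. -/
theorem PosDef.posSemidef_sub_inv_iff {K : Type*} [Field K] [PartialOrder K] [StarRing K]
    [StarOrderedRing K] {A B : Matrix n n K} (hA : A.PosDef) (hB : B.PosDef) :
    (B - A⁻¹).PosSemidef ↔ (A - B⁻¹).PosSemidef := by
  let := hA.isUnit.invertible
  let := hB.isUnit.invertible
  have h₁₁ := PosDef.fromBlocks₁₁ 1 B hA
  have h₂₂ := PosDef.fromBlocks₂₂ A 1 hB
  simp only [conjTranspose_one, Matrix.one_mul, Matrix.mul_one] at h₁₁ h₂₂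
  rw [← h₁₁, h₂₂]

theorem IsHermitian.posSemidef_diagonal_sum_norm_sub {𝕜 : Type*} [RCLike 𝕜] {A : Matrix n n 𝕜}
    (hA : A.IsHermitian) : (diagonal (fun i => ((∑ j, ‖A i j‖ : ℝ) : 𝕜)) - A).PosSemidef := by
  set M := diagonal (fun i => ((∑ j, ‖A i j‖ : ℝ) : 𝕜)) - A
  have hM : M.IsHermitian := (isHermitian_diagonal_of_self_adjoint _ (by ext; simp)).sub hA
  rw [hM.posSemidef_iff_eigenvalues_nonneg]
  intro i
  have hμ : Module.End.HasEigenvalue (toLin' M) (hM.eigenvalues i : 𝕜) := by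
    rw [Module.End.hasEigenvalue_iff_mem_spectrum, spectrum_toLin']
    exact (spectrum.algebraMap_mem_iff 𝕜).mpr (hM.eigenvalues_mem_spectrum_real i)
  -- With `r = ∑ j, ‖A k j‖`, the Gershgorin disc has centre `r - A k k` and radius
  -- `r - ‖A k k‖`, so it lies in the half-plane `0 ≤ re`.
  obtain ⟨k, hk⟩ := eigenvalue_mem_ball hμ
  rw [Metric.mem_closedBall, dist_comm, dist_eq_norm] at hk
  have hoff : ∑ j ∈ Finset.univ.erase k, ‖M k j‖ = ∑ j ∈ Finset.univ.erase k, ‖A k j‖ :=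
    Finset.sum_congr rfl fun j hj => by
      simp [M, diagonal_apply_ne _ (Finset.ne_of_mem_erase hj).symm]
  have hdiag : RCLike.re (M k k) =
      ‖A k k‖ + ∑ j ∈ Finset.univ.erase k, ‖A k j‖ - RCLike.re (A k k) := by
    simp [M]
  have hre := RCLike.re_le_norm (M k k - hM.eigenvalues i)
  have hAkk := RCLike.re_le_norm (A k k)
  simp only [map_sub, RCLike.ofReal_re] at hre
  rw [Pi.zero_apply]
  linarith

end Matrix

theorem stmt5_general {n : ℕ} (Q : Matrix (Fin n) (Fin n) ℝ) (hpd : Q.PosDef) :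
    (Q - Matrix.diagonal fun j => 1 / ∑ k, |Q⁻¹ j k|).PosSemidef := by
  set s : Fin n → ℝ := fun j => ∑ k, |Q⁻¹ j k|
  have hs : ∀ j, 0 < s j := fun j =>
    hpd.inv.diag_pos.trans_le <| (le_abs_self _).trans <|
      Finset.single_le_sum (fun k _ => abs_nonneg (Q⁻¹ j k)) (Finset.mem_univ j)
  have hdom : (diagonal s - Q⁻¹).PosSemidef := by
    simpa [s] using hpd.inv.isHermitian.posSemidef_diagonal_sum_norm_sub
  have hinv : diagonal (fun j => 1 / s j) = (diagonal s)⁻¹ := by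
    refine (inv_eq_left_inv ?_).symm
    rw [diagonal_mul_diagonal, ← diagonal_one]
    exact congrArg diagonal (funext fun j => one_div_mul_cancel (hs j).ne')
  rw [hinv]
  exact ((PosDef.diagonal hs).posSemidef_sub_inv_iff hpd).mpr hdom

theorem stmt5 {n : ℕ} (Q : Matrix (Fin n) (Fin n) ℝ) (hsymm : Q.IsSymm) (hpd : Q.PosDef) :
    (Q - Matrix.diagonal fun j => 1 / ∑ k, |Q⁻¹ j k|).PosSemidef :=
  stmt5_general Q hpd
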